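/- In the standing setup, suppose additionally that every column of Θ has Euclidean norm 1 and that rank(Ω) = d(d−1)/2 (so that ker(Ω) ⊂ ℝ^{d(d+1)/2} has dimension d). Let h₁,…,h_d be any basis of ker(Ω), and for each m let H_m be the symmetric d×d matrix associated with h_m. Then: (a) Θ⁻¹ H_m (Θ⁻¹)ᵀ is a diagonal matrix for every m ∈ {1,…,d}; and (b) if Θ' is any invertible d×d real matrix whose columns have Euclidean norm 1 such that (Θ')⁻¹ H_m ((Θ')⁻¹)ᵀ is diagonal for every m ∈ {1,…,d}, then there exist a permutation σ of {1,…,d} and signs κ₁,…,κ_d ∈ {−1, 1} such that the σ(ℓ)-th column of Θ' equals κ_ℓ times the ℓ-th column of Θ for every ℓ. In particular, the matrix Θ recovered this way does not depend on the choice of basis of ker(Ω). -/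

import Mathlib

open Matrix

/-- The flattening of the 4-way array `Ψ(D,F)`: the function on quadruples `(i,j,k,ℓ)` with
value `d_{i,k} f_{j,ℓ} + d_{j,ℓ} f_{i,k} − d_{i,ℓ} f_{j,k} − d_{j,k} f_{i,ℓ}`. -/
def vecPsi {d₁ d₂ : ℕ} (D F : Matrix (Fin d₁) (Fin d₂) ℝ) :
    Fin d₁ × Fin d₁ × Fin d₂ × Fin d₂ → ℝ :=
  fun q => D q.1 q.2.2.1 * F q.2.1 q.2.2.2 + D q.2.1 q.2.2.2 * F q.1 q.2.2.1
    - D q.1 q.2.2.2 * F q.2.1 q.2.2.1 - D q.2.1 q.2.2.1 * F q.1 q.2.2.2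

/-- The symmetric `d × d` matrix associated with a vector
`h = (h_{1,1},…,h_{1,d},h_{2,2},…,h_{d,d})ᵀ ∈ ℝ^{d(d+1)/2}`: diagonal entries `h_{i,i}`,
off-diagonal entries `h_{i,j}/2` for `i < j`. -/
noncomputable def symOf {d : ℕ} (h : {pr : Fin d × Fin d // pr.1 ≤ pr.2} → ℝ) :
    Matrix (Fin d) (Fin d) ℝ :=
  Matrix.of fun i j =>
    if hlt : i < j then h ⟨(i, j), le_of_lt hlt⟩ / 2
    else if hgt : j < i then h ⟨(j, i), le_of_lt hgt⟩ / 2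
    else h ⟨(i, j), not_lt.mp hgt⟩

/-!
`Ψ` is bilinear and symmetric with `Ψ(C, C) = 0` for every rank-one `C`, so expanding
`W_ℓ = ∑ᵢ θ^{i,ℓ} Cᵢ` shows that the half-vectorization of `Θ diag(c) Θᵀ` lies in `ker Ω` for
every `c ∈ ℝ^d`. These vectors form a `d`-dimensional space, which by the rank hypothesis is all
of `ker Ω`; hence every `H_m` has the form `Θ diag(c) Θᵀ`, which is (a). For (b), the matrix
`A = Θ'⁻¹ Θ` then has `A diag(c) Aᵀ` diagonal for every `c`; taking `c = e_ℓ` shows that each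
column of `A` has a single nonzero entry, so `A` is a monomial matrix, and unit columns force its
nonzero entries to be `±1`.
-/

section SymVec

variable {ι R : Type*} [LinearOrder ι] [CommSemiring R]

def symVec : Matrix ι ι R →ₗ[R] ({pr : ι × ι // pr.1 ≤ pr.2} → R) where
  toFun S pr := if pr.1.1 = pr.1.2 then S pr.1.1 pr.1.2 else 2 * S pr.1.1 pr.1.2
  map_add' S T := by ext pr; simp only [Matrix.add_apply, Pi.add_apply]; split_ifs <;> ring
  map_smul' r S := by
    ext pr; simp only [Matrix.smul_apply, smul_eq_mul, RingHom.id_apply, Pi.smul_apply]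
    split_ifs <;> ring

lemma sum_subtype_fst_le_snd [Fintype ι] {N : Type*} [AddCommMonoid N] (f : ι × ι → N) :
    ∑ pr : {pr : ι × ι // pr.1 ≤ pr.2}, f pr.1 = ∑ i, ∑ j, if i ≤ j then f (i, j) else 0 := by
  classical
  rw [← Finset.sum_subtype (Finset.univ.filter fun p : ι × ι => p.1 ≤ p.2) (by simp),
    Finset.sum_filter, Fintype.sum_prod_type]

lemma sum_symVec_smul [Fintype ι] {N : Type*} [AddCommMonoid N] [Module R N]
    {S : Matrix ι ι R} (hS : S.IsSymm) {g : ι → ι → N} (hg : ∀ i j, g i j = g j i) :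
    ∑ pr, symVec S pr • g pr.1.1 pr.1.2 = ∑ i, ∑ j, S i j • g i j := by
  set F : ι → ι → N := fun i j => S i j • g i j
  have hF : ∀ i j, F i j = F j i := fun i j => by simp only [F, hg i j, hS.apply i j]
  have hsplit : ∀ i j, (if i ≤ j then (if i = j then S i j else 2 * S i j) • g i j else 0)
      = (if i ≤ j then F i j else 0) + if i < j then F i j else 0 := by
    intro i j
    rcases lt_trichotomy i j with hij | rfl | hij
    · simp [F, hij, hij.le, hij.ne, two_mul, add_smul]
    · simp [F]
    · simp [not_le.mpr hij, not_lt.mpr hij.le]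
  have hswap : ∑ i, ∑ j, (if i < j then F i j else 0) = ∑ i, ∑ j, if j < i then F i j else 0 := by
    rw [Finset.sum_comm]; simp only [hF]
  calc ∑ pr, symVec S pr • g pr.1.1 pr.1.2
      = ∑ i, ∑ j, if i ≤ j then (if i = j then S i j else 2 * S i j) • g i j else 0 :=
        sum_subtype_fst_le_snd fun p =>
          (if p.1 = p.2 then S p.1 p.2 else 2 * S p.1 p.2) • g p.1 p.2
    _ = ∑ i, ∑ j, ((if i ≤ j then F i j else 0) + if j < i then F i j else 0) := by
        simp only [hsplit, Finset.sum_add_distrib, hswap]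
    _ = ∑ i, ∑ j, F i j := by
        refine Finset.sum_congr rfl fun i _ => Finset.sum_congr rfl fun j _ => ?_
        by_cases hij : i ≤ j
        · simp [hij, not_lt.mpr hij]
        · simp [hij, not_le.mp hij]

end SymVec

lemma symOf_symVec {d : ℕ} {S : Matrix (Fin d) (Fin d) ℝ} (hS : S.IsSymm) :
    symOf (symVec S) = S := by
  ext i j
  rcases lt_trichotomy i j with hij | rfl | hij
  · simp [symOf, symVec, hij, hij.ne]
  · simp [symOf, symVec]
  · simp [symOf, symVec, hij, hij.ne, not_lt.mpr hij.le, hS.apply i j]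

noncomputable def symOfLinearMap (d : ℕ) :
    ({pr : Fin d × Fin d // pr.1 ≤ pr.2} → ℝ) →ₗ[ℝ] Matrix (Fin d) (Fin d) ℝ where
  toFun := symOf
  map_add' x y := by
    ext i j
    simp only [symOf, of_apply, Pi.add_apply, Matrix.add_apply]
    split_ifs <;> ring
  map_smul' r x := by
    ext i j
    simp only [symOf, of_apply, Pi.smul_apply, Matrix.smul_apply, smul_eq_mul, RingHom.id_apply]
    split_ifs <;> ring

lemma card_subtype_fst_le_snd (d : ℕ) :
    Fintype.card {pr : Fin d × Fin d // pr.1 ≤ pr.2} = d * (d - 1) / 2 + d := by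
  rw [← Fintype.card_congr Sym2.sortEquiv, Sym2.card, Fintype.card_fin, Nat.choose_succ_succ',
    Nat.choose_one_right, Nat.choose_two_right, add_comm]

noncomputable def vecPsiBilin (d₁ d₂ : ℕ) :
    Matrix (Fin d₁) (Fin d₂) ℝ →ₗ[ℝ] Matrix (Fin d₁) (Fin d₂) ℝ →ₗ[ℝ]
      (Fin d₁ × Fin d₁ × Fin d₂ × Fin d₂ → ℝ) :=
  LinearMap.mk₂ ℝ vecPsi (fun _ _ _ => by ext; simp [vecPsi]; ring)
    (fun _ _ _ => by ext; simp [vecPsi]; ring) (fun _ _ _ => by ext; simp [vecPsi]; ring)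
    (fun _ _ _ => by ext; simp [vecPsi]; ring)

lemma vecPsi_comm {d₁ d₂ : ℕ} (D F : Matrix (Fin d₁) (Fin d₂) ℝ) : vecPsi D F = vecPsi F D := by
  ext; simp only [vecPsi]; ring

lemma vecPsi_vecMulVec_self {d₁ d₂ : ℕ} (a : Fin d₁ → ℝ) (b : Fin d₂ → ℝ) :
    vecPsi (vecMulVec a b) (vecMulVec a b) = 0 := by
  ext; simp only [vecPsi, vecMulVec_apply, Pi.zero_apply]; ring

lemma LinearMap.sum_sum_smul_map₂_sum {R M N ι κ : Type*} [CommSemiring R] [AddCommMonoid M]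
    [Module R M] [AddCommMonoid N] [Module R N] [Fintype ι] [Fintype κ]
    (B : M →ₗ[R] M →ₗ[R] N) (P : Matrix κ ι R) (S : Matrix ι ι R) (x : κ → M) :
    ∑ i, ∑ j, S i j • B (∑ a, P a i • x a) (∑ b, P b j • x b)
      = ∑ a, ∑ b, (P * S * Pᵀ) a b • B (x a) (x b) := by
  calc ∑ i, ∑ j, S i j • B (∑ a, P a i • x a) (∑ b, P b j • x b)
      = ∑ i, ∑ j, ∑ a, ∑ b, (P a i * S i j * P b j) • B (x a) (x b) := by
        simp only [map_sum, map_smul, LinearMap.sum_apply, LinearMap.smul_apply, Finset.smul_sum,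
          smul_smul]
        refine Finset.sum_congr rfl fun i _ => Finset.sum_congr rfl fun j _ => ?_
        rw [Finset.sum_comm]
        simp only [mul_comm, mul_left_comm]
    _ = ∑ a, ∑ b, ∑ i, ∑ j, (P a i * S i j * P b j) • B (x a) (x b) := by
        rw [Finset.sum_congr rfl fun i _ => Finset.sum_comm, Finset.sum_comm]
        refine Finset.sum_congr rfl fun a _ => ?_
        rw [Finset.sum_congr rfl fun i _ => Finset.sum_comm, Finset.sum_comm]
    _ = ∑ a, ∑ b, (P * S * Pᵀ) a b • B (x a) (x b) := by
        simp only [Matrix.mul_apply, transpose_apply, Finset.sum_mul, Finset.sum_smul]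
        refine Finset.sum_congr rfl fun a _ => Finset.sum_congr rfl fun b _ => Finset.sum_comm

namespace Matrix

variable {m n R : Type*}

lemma rank_add_finrank_ker_mulVecLin {K : Type*} [Field K] [Fintype n] (A : Matrix m n K) :
    A.rank + Module.finrank K (LinearMap.ker A.mulVecLin) = Fintype.card n := by
  rw [rank, LinearMap.finrank_range_add_finrank_ker, Module.finrank_fintype_fun_eq_card]

lemma mul_apply_of_forall_ne_eq_zero {o : Type*} [Fintype n] [NonUnitalNonAssocSemiring R]
    (B : Matrix m n R) {A : Matrix n o R} {σ : o → n} (hA : ∀ i ℓ, i ≠ σ ℓ → A i ℓ = 0)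
    (i : m) (ℓ : o) : (B * A) i ℓ = B i (σ ℓ) * A (σ ℓ) ℓ :=
  Fintype.sum_eq_single _ fun k hk => mul_eq_zero_of_right _ (hA k ℓ hk)

lemma isDiag_of_mem_span {M : Type*} [Semiring R] [AddCommMonoid M] [Module R M]
    (L : M →ₗ[R] Matrix n n R) {s : Set M} (hs : ∀ x ∈ s, (L x).IsDiag) {x : M}
    (hx : x ∈ Submodule.span R s) : (L x).IsDiag := by
  induction hx using Submodule.span_induction with
  | mem x hx => exact hs x hx
  | zero => rw [map_zero]; exact isDiag_zero
  | add x y _ _ hx hy => rw [map_add]; exact hx.add hy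
  | smul r x _ hx => rw [map_smul]; exact hx.smul r

variable [Fintype n] [CommSemiring R]

def congrLinearMap (P : Matrix m n R) : Matrix n n R →ₗ[R] Matrix m m R where
  toFun X := P * X * Pᵀ
  map_add' X Y := by rw [Matrix.mul_add, Matrix.add_mul]
  map_smul' r X := by rw [Matrix.mul_smul, Matrix.smul_mul, RingHom.id_apply]

lemma isSymm_mul_diagonal_mul_transpose [DecidableEq n] (P : Matrix m n R) (c : n → R) :
    (P * diagonal c * Pᵀ).IsSymm := by
  simp [IsSymm, transpose_mul, Matrix.mul_assoc]

lemma inv_mul_mul_diagonal_mul_transpose_mul_inv_transpose {R : Type*} [DecidableEq n]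
    [CommRing R] {P : Matrix n n R} (hP : IsUnit P.det) (c : n → R) :
    P⁻¹ * (P * diagonal c * Pᵀ) * P⁻¹ᵀ = diagonal c := by
  have hT : Pᵀ * P⁻¹ᵀ = 1 := by rw [← transpose_mul, nonsing_inv_mul _ hP, transpose_one]
  rw [← Matrix.mul_assoc, ← Matrix.mul_assoc, nonsing_inv_mul _ hP, Matrix.one_mul,
    Matrix.mul_assoc, hT, Matrix.mul_one]

theorem exists_perm_of_forall_isDiag_mul_diagonal_mul_transpose {K : Type*} [Field K]
    [DecidableEq n] {A : Matrix n n K} (hA : IsUnit A.det)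
    (hdiag : ∀ c, (A * diagonal c * Aᵀ).IsDiag) :
    ∃ σ : Equiv.Perm n, ∀ i ℓ, i ≠ σ ℓ → A i ℓ = 0 := by
  have hcol : ∀ ℓ i j, i ≠ j → A i ℓ * A j ℓ = 0 := by
    intro ℓ i j hij
    have h : (A * diagonal (Pi.single ℓ (1 : K)) * Aᵀ) i j = 0 := hdiag _ hij
    rw [mul_apply, Fintype.sum_eq_single ℓ fun k hk => by simp [hk]] at h
    simpa [mul_eq_zero] using h
  have hnz : ∀ ℓ, ∃ i, A i ℓ ≠ 0 := fun ℓ => by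
    by_contra! h
    exact hA.ne_zero (det_eq_zero_of_column_eq_zero ℓ h)
  choose σ hσ using hnz
  have hsupp : ∀ i ℓ, i ≠ σ ℓ → A i ℓ = 0 := fun i ℓ hi =>
    (mul_eq_zero.mp (hcol ℓ i (σ ℓ) hi)).resolve_right (hσ ℓ)
  have hsurj : Function.Surjective σ := fun i => by
    by_contra! h
    exact hA.ne_zero (det_eq_zero_of_row_eq_zero i fun ℓ => hsupp i ℓ (h ℓ).symm)
  exact ⟨Equiv.ofBijective σ hsurj.bijective_of_finite, hsupp⟩

end Matrix

lemma eq_one_or_eq_neg_one_of_sum_sq_mul {ι K : Type*} [Fintype ι] [Field K] {x : ι → K} {κ : K}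
    (hx : ∑ i, x i ^ 2 = 1) (hxκ : ∑ i, (x i * κ) ^ 2 = 1) : κ = 1 ∨ κ = -1 := by
  simp only [mul_pow, ← Finset.sum_mul, hx, one_mul] at hxκ
  exact sq_eq_one_iff.mp hxκ

theorem Matrix.exists_perm_signs_of_forall_isDiag {n K : Type*} [Fintype n] [DecidableEq n]
    [Field K] {Θ Θ' : Matrix n n K} (hΘ : IsUnit Θ.det) (hΘ' : IsUnit Θ'.det)
    (hcol : ∀ ℓ, ∑ i, Θ i ℓ ^ 2 = 1) (hcol' : ∀ ℓ, ∑ i, Θ' i ℓ ^ 2 = 1)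
    (hdiag : ∀ c, (Θ'⁻¹ * (Θ * diagonal c * Θᵀ) * Θ'⁻¹ᵀ).IsDiag) :
    ∃ (σ : Equiv.Perm n) (κ : n → K),
      (∀ ℓ, κ ℓ = 1 ∨ κ ℓ = -1) ∧ ∀ ℓ i, Θ' i (σ ℓ) = κ ℓ * Θ i ℓ := by
  set A := Θ'⁻¹ * Θ
  have hA : IsUnit A.det := by
    rw [det_mul]; exact (isUnit_nonsing_inv_det Θ' hΘ').mul hΘ
  obtain ⟨σ, hσ⟩ := exists_perm_of_forall_isDiag_mul_diagonal_mul_transpose hA fun c => by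
    simpa [A, transpose_mul, Matrix.mul_assoc] using hdiag c
  have hΘσ : ∀ ℓ i, Θ i ℓ = Θ' i (σ ℓ) * A (σ ℓ) ℓ := fun ℓ i => by
    rw [← mul_apply_of_forall_ne_eq_zero Θ' hσ, ← Matrix.mul_assoc, mul_nonsing_inv _ hΘ',
      Matrix.one_mul]
  have hκ : ∀ ℓ, A (σ ℓ) ℓ = 1 ∨ A (σ ℓ) ℓ = -1 := fun ℓ =>
    eq_one_or_eq_neg_one_of_sum_sq_mul (hcol' (σ ℓ)) (by simpa only [hΘσ] using hcol ℓ)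
  refine ⟨σ, fun ℓ => A (σ ℓ) ℓ, hκ, fun ℓ i => ?_⟩
  rcases hκ ℓ with h | h <;> simp [hΘσ ℓ i, h]

section Kernel

variable {d d₁ d₂ : ℕ} {W : Fin d → Matrix (Fin d₁) (Fin d₂) ℝ}
  {Ω : Matrix (Fin d₁ × Fin d₁ × Fin d₂ × Fin d₂) {pr : Fin d × Fin d // pr.1 ≤ pr.2} ℝ}
  {u : Fin d → Fin d₁ → ℝ} {v : Fin d → Fin d₂ → ℝ} {Θ : Matrix (Fin d) (Fin d) ℝ}

lemma mulVec_symVec_eq_sum_vecPsi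
    (hΩ : ∀ idx pr, Ω idx pr = vecPsi (W pr.val.1) (W pr.val.2) idx)
    {S : Matrix (Fin d) (Fin d) ℝ} (hS : S.IsSymm) :
    Ω *ᵥ symVec S = ∑ i, ∑ j, S i j • vecPsi (W i) (W j) := by
  rw [← sum_symVec_smul hS fun i j => vecPsi_comm (W i) (W j)]
  ext idx
  simp [mulVec, dotProduct, hΩ, Finset.sum_apply, mul_comm]

lemma mulVec_symVec_mul_diagonal_mul_transpose_eq_zero (hΘ : IsUnit Θ.det)
    (hW : ∀ ℓ, W ℓ = ∑ i, Θ⁻¹ i ℓ • vecMulVec (u i) (v i))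
    (hΩ : ∀ idx pr, Ω idx pr = vecPsi (W pr.val.1) (W pr.val.2) idx) (c : Fin d → ℝ) :
    Ω *ᵥ symVec (Θ * diagonal c * Θᵀ) = 0 := by
  have h := LinearMap.sum_sum_smul_map₂_sum (vecPsiBilin d₁ d₂) Θ⁻¹ (Θ * diagonal c * Θᵀ)
    fun a => vecMulVec (u a) (v a)
  simp only [vecPsiBilin, LinearMap.mk₂_apply, ← hW,
    inv_mul_mul_diagonal_mul_transpose_mul_inv_transpose hΘ] at h
  rw [mulVec_symVec_eq_sum_vecPsi hΩ (isSymm_mul_diagonal_mul_transpose Θ c), h]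
  simp [diagonal_apply, ite_smul, vecPsi_vecMulVec_self]

lemma range_symVec_comp_congrLinearMap_eq_ker (hΘ : IsUnit Θ.det)
    (hW : ∀ ℓ, W ℓ = ∑ i, Θ⁻¹ i ℓ • vecMulVec (u i) (v i))
    (hΩ : ∀ idx pr, Ω idx pr = vecPsi (W pr.val.1) (W pr.val.2) idx)
    (hrank : Ω.rank = d * (d - 1) / 2) :
    LinearMap.range (symVec ∘ₗ congrLinearMap Θ ∘ₗ diagonalLinearMap (Fin d) ℝ ℝ)
      = LinearMap.ker Ω.mulVecLin := by
  set Φ := symVec ∘ₗ congrLinearMap Θ ∘ₗ diagonalLinearMap (Fin d) ℝ ℝ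
  have hinj : Function.Injective Φ := fun c c' hcc => by
    have := congrArg (fun x => Θ⁻¹ * symOf x * Θ⁻¹ᵀ) hcc
    exact funext <| by
      simpa [Φ, congrLinearMap, symOf_symVec (isSymm_mul_diagonal_mul_transpose Θ _),
        inv_mul_mul_diagonal_mul_transpose_mul_inv_transpose hΘ] using this
  refine Submodule.eq_of_le_of_finrank_le ?_ ?_
  · rintro _ ⟨c, rfl⟩
    exact mulVec_symVec_mul_diagonal_mul_transpose_eq_zero hΘ hW hΩ c
  · have := Ω.rank_add_finrank_ker_mulVecLin
    rw [card_subtype_fst_le_snd, hrank] at this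
    rw [LinearMap.finrank_range_of_inj hinj, Module.finrank_fin_fun]
    omega

lemma mem_ker_mulVecLin_iff (hΘ : IsUnit Θ.det)
    (hW : ∀ ℓ, W ℓ = ∑ i, Θ⁻¹ i ℓ • vecMulVec (u i) (v i))
    (hΩ : ∀ idx pr, Ω idx pr = vecPsi (W pr.val.1) (W pr.val.2) idx)
    (hrank : Ω.rank = d * (d - 1) / 2) (x : {pr : Fin d × Fin d // pr.1 ≤ pr.2} → ℝ) :
    x ∈ LinearMap.ker Ω.mulVecLin ↔ ∃ c, symVec (Θ * diagonal c * Θᵀ) = x := by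
  rw [← range_symVec_comp_congrLinearMap_eq_ker hΘ hW hΩ hrank]
  exact LinearMap.mem_range

end Kernel

theorem stmt11_general (d d₁ d₂ : ℕ) (u : Fin d → Fin d₁ → ℝ) (v : Fin d → Fin d₂ → ℝ)
    (Θ : Matrix (Fin d) (Fin d) ℝ) (hΘ : IsUnit Θ.det)
    (hΘcol : ∀ ℓ, ∑ i, Θ i ℓ ^ 2 = 1)
    (W : Fin d → Matrix (Fin d₁) (Fin d₂) ℝ)
    (hW : ∀ ℓ, W ℓ = ∑ i, Θ⁻¹ i ℓ • Matrix.vecMulVec (u i) (v i))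
    (Ω : Matrix (Fin d₁ × Fin d₁ × Fin d₂ × Fin d₂) {pr : Fin d × Fin d // pr.1 ≤ pr.2} ℝ)
    (hΩ : ∀ idx pr, Ω idx pr = vecPsi (W pr.val.1) (W pr.val.2) idx)
    (hrank : Ω.rank = d * (d - 1) / 2)
    (h : Fin d → ({pr : Fin d × Fin d // pr.1 ≤ pr.2} → ℝ))
    (hspan : Submodule.span ℝ (Set.range h) = LinearMap.ker Ω.mulVecLin) :
    (∀ m, Matrix.IsDiag (Θ⁻¹ * symOf (h m) * (Θ⁻¹)ᵀ)) ∧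
    ∀ Θ' : Matrix (Fin d) (Fin d) ℝ, IsUnit Θ'.det →
      (∀ ℓ, ∑ i, Θ' i ℓ ^ 2 = 1) →
      (∀ m, Matrix.IsDiag (Θ'⁻¹ * symOf (h m) * (Θ'⁻¹)ᵀ)) →
      ∃ (σ : Equiv.Perm (Fin d)) (κ : Fin d → ℝ),
        (∀ ℓ, κ ℓ = 1 ∨ κ ℓ = -1) ∧ ∀ ℓ i, Θ' i (σ ℓ) = κ ℓ * Θ i ℓ := by
  have hker := mem_ker_mulVecLin_iff hΘ hW hΩ hrank
  have hsym : ∀ c, symOf (symVec (Θ * diagonal c * Θᵀ)) = Θ * diagonal c * Θᵀ := fun c =>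
    symOf_symVec (isSymm_mul_diagonal_mul_transpose Θ c)
  refine ⟨fun m => ?_, fun Θ' hΘ' hcol' hdiag' => ?_⟩
  · obtain ⟨c, hc⟩ := (hker (h m)).1 (hspan ▸ Submodule.subset_span (Set.mem_range_self m))
    rw [← hc, hsym, inv_mul_mul_diagonal_mul_transpose_mul_inv_transpose hΘ]
    exact isDiag_diagonal c
  refine exists_perm_signs_of_forall_isDiag hΘ hΘ' hΘcol hcol' fun c => ?_
  have hc := isDiag_of_mem_span (congrLinearMap Θ'⁻¹ ∘ₗ symOfLinearMap d)
    (Set.forall_mem_range.2 hdiag') (hspan ▸ (hker _).2 ⟨c, rfl⟩)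
  simpa [congrLinearMap, symOfLinearMap, hsym] using hc

theorem stmt11 (d d₁ d₂ : ℕ) (hd : 2 ≤ d) (hd₁ : 1 ≤ d₁) (hd₂ : 1 ≤ d₂)
    (u : Fin d → Fin d₁ → ℝ) (v : Fin d → Fin d₂ → ℝ)
    (hu : ∀ ℓ, u ℓ ⬝ᵥ u ℓ = 1) (hv : ∀ ℓ, v ℓ ⬝ᵥ v ℓ = 1)
    (hli : LinearIndependent ℝ
      (fun ℓ : Fin d => fun pr : Fin d₂ × Fin d₁ => v ℓ pr.1 * u ℓ pr.2))
    (Θ : Matrix (Fin d) (Fin d) ℝ) (hΘ : IsUnit Θ.det)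
    (hΘcol : ∀ ℓ, ∑ i, Θ i ℓ ^ 2 = 1)
    (W : Fin d → Matrix (Fin d₁) (Fin d₂) ℝ)
    (hW : ∀ ℓ, W ℓ = ∑ i, Θ⁻¹ i ℓ • Matrix.vecMulVec (u i) (v i))
    (Ω : Matrix (Fin d₁ × Fin d₁ × Fin d₂ × Fin d₂) {pr : Fin d × Fin d // pr.1 ≤ pr.2} ℝ)
    (hΩ : ∀ idx pr, Ω idx pr = vecPsi (W pr.val.1) (W pr.val.2) idx)
    (hrank : Ω.rank = d * (d - 1) / 2)
    (h : Fin d → ({pr : Fin d × Fin d // pr.1 ≤ pr.2} → ℝ))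
    (hbasis : LinearIndependent ℝ h)
    (hspan : Submodule.span ℝ (Set.range h) = LinearMap.ker Ω.mulVecLin) :
    (∀ m, Matrix.IsDiag (Θ⁻¹ * symOf (h m) * (Θ⁻¹)ᵀ)) ∧
    ∀ Θ' : Matrix (Fin d) (Fin d) ℝ, IsUnit Θ'.det →
      (∀ ℓ, ∑ i, Θ' i ℓ ^ 2 = 1) →
      (∀ m, Matrix.IsDiag (Θ'⁻¹ * symOf (h m) * (Θ'⁻¹)ᵀ)) →
      ∃ (σ : Equiv.Perm (Fin d)) (κ : Fin d → ℝ),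
        (∀ ℓ, κ ℓ = 1 ∨ κ ℓ = -1) ∧ ∀ ℓ i, Θ' i (σ ℓ) = κ ℓ * Θ i ℓ :=
  stmt11_general d d₁ d₂ u v Θ hΘ hΘcol W hW Ω hΩ hrank h hspan
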